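/- If a module M_R is (σ,δ)-compatible and reduced, then it satisfies condition (*): for any m(x) ∈ M[x;σ,δ] and f(x) ∈ R[x;σ,δ], m(x)f(x) = 0 implies m(x)·r·f(x) = 0 for all r ∈ R. -/

import Mathlib

open MulOpposite

/-- `fw σ δ i j` is `f_i^j`, the sum of all words in `σ`, `δ` built with `i` factors of `σ`
and `j - i` factors of `δ`. -/
def fw {R : Type*} [Ring R] (σ δ : R → R) : ℕ → ℕ → R → R
  | 0, 0 => id
  | _ + 1, 0 => fun _ => 0
  | 0, j + 1 => fun a => δ (fw σ δ 0 j a)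
  | i + 1, j + 1 => fun a => σ (fw σ δ i j a) + δ (fw σ δ (i + 1) j a)

/-- Multiplication of the Ore extension `R[x;σ,δ]`, on coefficient sequences. -/
noncomputable def skewMul {R : Type*} [Ring R] (σ δ : R → R) (p q : ℕ →₀ R) : ℕ →₀ R :=
  p.sum fun j a => q.sum fun l b =>
    ∑ i ∈ Finset.range (j + 1), Finsupp.single (i + l) (a * fw σ δ i j b)

/-- The action of `R[x;σ,δ]` on the skew polynomial module `M[x;σ,δ]`, where `M` is a
right `R`-module (a module over `Rᵐᵒᵖ`): `(m x^j)·(b x^l) = Σ_{i≤j} (m·f_i^j(b)) x^{i+l}`. -/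
noncomputable def skewSMul {R : Type*} [Ring R] (σ δ : R → R) {M : Type*} [AddCommGroup M]
    [Module Rᵐᵒᵖ M] (m : ℕ →₀ M) (q : ℕ →₀ R) : ℕ →₀ M :=
  m.sum fun j mm => q.sum fun l b =>
    ∑ i ∈ Finset.range (j + 1), Finsupp.single (i + l) (op (fw σ δ i j b) • mm)

/-- A right `R`-module `M` is `(σ,δ)`-skew McCoy if whenever `m(x) g(x) = 0` in `M[x;σ,δ]`
with `g(x) ≠ 0`, there is a nonzero `a ∈ R` with `m(x) a = 0`. -/
def IsSkewMcCoy {R : Type*} [Ring R] (σ δ : R → R) (M : Type*) [AddCommGroup M]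
    [Module Rᵐᵒᵖ M] : Prop :=
  ∀ (m : ℕ →₀ M) (g : ℕ →₀ R), g ≠ 0 → skewSMul σ δ m g = 0 →
    ∃ a : R, a ≠ 0 ∧ skewSMul σ δ m (Finsupp.single 0 a) = 0

/-- A right `R`-module `M` is `(σ,δ)`-skew Armendariz if `m(x) g(x) = 0` implies
`(m_i x^i)(b_j x^j) = 0` for all `i, j`. -/
def IsSkewArmendariz {R : Type*} [Ring R] (σ δ : R → R) (M : Type*) [AddCommGroup M]
    [Module Rᵐᵒᵖ M] : Prop :=
  ∀ (m : ℕ →₀ M) (g : ℕ →₀ R), skewSMul σ δ m g = 0 →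
    ∀ i j, skewSMul σ δ (Finsupp.single i (m i)) (Finsupp.single j (g j)) = 0

/-- `σ`-compatibility of a right module: `m a = 0 ↔ m σ(a) = 0`. -/
def SigmaCompatible {R : Type*} [Ring R] (σ : R → R) (M : Type*) [AddCommGroup M]
    [Module Rᵐᵒᵖ M] : Prop :=
  ∀ (m : M) (a : R), op a • m = 0 ↔ op (σ a) • m = 0

/-- `δ`-compatibility of a right module: `m a = 0 → m δ(a) = 0`. -/
def DeltaCompatible {R : Type*} [Ring R] (δ : R → R) (M : Type*) [AddCommGroup M]
    [Module Rᵐᵒᵖ M] : Prop :=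
  ∀ (m : M) (a : R), op a • m = 0 → op (δ a) • m = 0

/-- A right module `M` is reduced if `m a = 0` implies `mR ∩ Ma = 0`. -/
def IsReducedModule {R : Type*} [Ring R] (M : Type*) [AddCommGroup M]
    [Module Rᵐᵒᵖ M] : Prop :=
  ∀ (m : M) (a : R), op a • m = 0 →
    ∀ x : M, (∃ r : R, op r • m = x) → (∃ m' : M, op a • m' = x) → x = 0

/-- Condition `(*)`: `m(x) f(x) = 0` implies `m(x) R f(x) = 0`. -/
def StarCondition {R : Type*} [Ring R] (σ δ : R → R) (M : Type*) [AddCommGroup M]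
    [Module Rᵐᵒᵖ M] : Prop :=
  ∀ (m : ℕ →₀ M) (f : ℕ →₀ R), skewSMul σ δ m f = 0 →
    ∀ r : R, skewSMul σ δ m (skewMul σ δ (Finsupp.single 0 r) f) = 0

/-!
A reduced module is semicommutative, so it suffices to show that `m(x) f(x) = 0` forces
`m_j f_l = 0` for all coefficients: then `m_j (r f_l) = 0`, and compatibility propagates this to
every term `m_j f_i^j(r f_l)` of `m(x) r f(x)`. The coefficientwise vanishing is proved by
downward induction on `j + l`: once `m_j f_l = 0` for all `j + l > t`, compatibility reduces the
coefficient of `x^t` to `Σ_{j+l=t} m_j f_j^j(f_l)` and `f_j^j` acts like `σ^j`, so reducedness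
kills the summands one at a time.
-/

section SkewPolynomialModule

variable {R : Type*} [Ring R] {M : Type*} [AddCommGroup M] [Module Rᵐᵒᵖ M] {σ δ : R → R}

namespace IsReducedModule

variable (hM : IsReducedModule (R := R) M)
include hM

theorem op_mul_smul_eq_zero {a : R} {m : M} (h : op a • m = 0) (r : R) :
    op (r * a) • m = 0 :=
  hM m a h _ ⟨r * a, rfl⟩ ⟨op r • m, by rw [op_mul, mul_smul]⟩

theorem op_smul_eq_zero_of_op_mul_self_smul_eq_zero {a : R} {m : M}
    (h : op (a * a) • m = 0) : op a • m = 0 :=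
  hM (op a • m) a (by rw [← mul_smul, ← op_mul, h]) _ ⟨1, one_smul _ _⟩ ⟨m, rfl⟩

/-- Multiplying the sum by `c_j` kills the other terms (the lower ones by induction, the higher
ones by semicommutativity) and leaves `m_j c_j² = 0`. -/
theorem op_smul_eq_zero_of_sum_eq_zero {s : Finset ℕ} {c : ℕ → R} {v : ℕ → M}
    (hsum : ∑ j ∈ s, op (c j) • v j = 0)
    (hlt : ∀ j ∈ s, ∀ j' ∈ s, j' < j → op (c j') • v j = 0) :
    ∀ j ∈ s, op (c j) • v j = 0 := by
  intro j
  induction j using Nat.strong_induction_on with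
  | _ j ih =>
  intro hj
  have hprod : ∑ k ∈ s, op (c k * c j) • v k = 0 := by
    simp_rw [op_mul, mul_smul, ← Finset.smul_sum, hsum, smul_zero]
  rw [Finset.sum_eq_single_of_mem j hj fun k hk hkj => ?_] at hprod
  · exact hM.op_smul_eq_zero_of_op_mul_self_smul_eq_zero hprod
  rcases lt_or_gt_of_ne hkj with hk_lt | hk_gt
  · rw [op_mul, mul_smul, ih k hk_lt hk, smul_zero]
  · exact hM.op_mul_smul_eq_zero (hlt k hk j hj hk_gt) (c k)

end IsReducedModule

theorem fw_eq_fw_zero_of_lt : ∀ {i j : ℕ}, j < i → ∀ a : R, fw σ δ i j a = fw σ δ i j 0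
  | _ + 1, 0, _, _ => rfl
  | i + 1, j + 1, h, a => by
    have hij : j < i := Nat.succ_lt_succ_iff.mp h
    simp only [fw, fw_eq_fw_zero_of_lt hij a, fw_eq_fw_zero_of_lt h.le a]

theorem skewSMul_apply (m : ℕ →₀ M) (q : ℕ →₀ R) (k : ℕ) :
    skewSMul σ δ m q k = ∑ j ∈ m.support, ∑ l ∈ q.support, ∑ i ∈ Finset.range (j + 1),
      (if i + l = k then op (fw σ δ i j (q l)) • m j else 0) := by
  simp only [skewSMul, Finsupp.finsetSum_apply, Finsupp.single_apply, Finsupp.sum]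

theorem skewMul_single_zero_apply (r : R) (f : ℕ →₀ R) (l : ℕ) :
    skewMul σ δ (Finsupp.single 0 r) f l = r * f l := by
  simp +contextual [skewMul, fw, Finsupp.sum_apply, Finsupp.single_apply]

section Compatible

variable (hσ : SigmaCompatible σ M) (hδ : DeltaCompatible δ M)
include hσ hδ

theorem op_fw_smul_eq_zero {a : R} {m : M} (h : op a • m = 0) :
    ∀ i j, op (fw σ δ i j a) • m = 0
  | 0, 0 => h
  | _ + 1, 0 => by simp [fw]
  | 0, j + 1 => hδ m _ (op_fw_smul_eq_zero h 0 j)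
  | i + 1, j + 1 => by
    simp only [fw, op_add, add_smul, (hσ m _).mp (op_fw_smul_eq_zero h i j),
      hδ m _ (op_fw_smul_eq_zero h (i + 1) j), add_zero]

theorem op_fw_zero_smul (i j : ℕ) (m : M) : op (fw σ δ i j (0 : R)) • m = 0 :=
  op_fw_smul_eq_zero hσ hδ (by simp) i j

/-- Modulo elements annihilating all of `M`, `f_j^j = σ^j`. -/
theorem op_fw_self_smul_eq_zero_iff (a : R) (m : M) :
    ∀ j, op (fw σ δ j j a) • m = 0 ↔ op a • m = 0
  | 0 => Iff.rfl
  | j + 1 => by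
    have hlow : fw σ δ (j + 1) j a = fw σ δ (j + 1) j 0 := fw_eq_fw_zero_of_lt j.lt_succ_self a
    simp only [fw, hlow, op_add, add_smul, hδ m _ (op_fw_zero_smul hσ hδ _ _ m), add_zero]
    rw [← hσ m, op_fw_self_smul_eq_zero_iff a m j]

theorem skewSMul_apply_eq_sum_diag {m : ℕ →₀ M} {f : ℕ →₀ R} {t : ℕ}
    (hgt : ∀ j l, t < j + l → op (f l) • m j = 0) :
    skewSMul σ δ m f t = ∑ j ∈ m.support,
      op (∑ l ∈ f.support, if j + l = t then fw σ δ j j (f l) else 0) • m j := by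
  rw [skewSMul_apply]
  refine Finset.sum_congr rfl fun j _ => ?_
  rw [Finset.op_sum, Finset.sum_smul]
  refine Finset.sum_congr rfl fun l _ => ?_
  rw [Finset.sum_eq_single_of_mem j (Finset.mem_range.2 j.lt_succ_self) fun i hi hij => ?_]
  · split_ifs <;> simp
  · have hij : i < j := lt_of_le_of_ne (Finset.mem_range_succ_iff.1 hi) hij
    split_ifs with hil
    · exact op_fw_smul_eq_zero hσ hδ (hgt j l (by omega)) i j
    · rfl

theorem skewSMul_eq_zero_of_forall_op_smul_eq_zero {m : ℕ →₀ M} {g : ℕ →₀ R}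
    (h : ∀ j l, op (g l) • m j = 0) : skewSMul σ δ m g = 0 :=
  Finset.sum_eq_zero fun j _ => Finset.sum_eq_zero fun l _ => Finset.sum_eq_zero fun i _ => by
    rw [op_fw_smul_eq_zero hσ hδ (h j l) i j, Finsupp.single_zero]

variable (hM : IsReducedModule (R := R) M)
include hM

theorem op_smul_eq_zero_of_add_eq {m : ℕ →₀ M} {f : ℕ →₀ R} {t : ℕ}
    (h : skewSMul σ δ m f = 0) (hgt : ∀ j l, t < j + l → op (f l) • m j = 0)
    {j l : ℕ} (hjl : j + l = t) : op (f l) • m j = 0 := by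
  set c : ℕ → R := fun j => ∑ l ∈ f.support, if j + l = t then fw σ δ j j (f l) else 0
  have hsum : ∑ j ∈ m.support, op (c j) • m j = 0 := by
    rw [← skewSMul_apply_eq_sum_diag hσ hδ hgt, h, Finsupp.zero_apply]
  have hlt : ∀ j ∈ m.support, ∀ j' ∈ m.support, j' < j → op (c j') • m j = 0 := by
    intro j _ j' _ hj'j
    simp only [c, Finset.op_sum, Finset.sum_smul]
    refine Finset.sum_eq_zero fun l _ => ?_
    split_ifs with hj'l
    · exact op_fw_smul_eq_zero hσ hδ (hgt j l (by omega)) j' j'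
    · simp
  by_cases hmj : m j = 0
  · rw [hmj, smul_zero]
  by_cases hfl : f l = 0
  · rw [hfl, op_zero, zero_smul]
  have hc : c j = fw σ δ j j (f l) :=
    (Finset.sum_eq_single_of_mem l (Finsupp.mem_support_iff.2 hfl)
      fun l' _ hl' => if_neg (by omega)).trans (if_pos hjl)
  have hdiag := hM.op_smul_eq_zero_of_sum_eq_zero hsum hlt j (Finsupp.mem_support_iff.2 hmj)
  rwa [hc, op_fw_self_smul_eq_zero_iff hσ hδ] at hdiag

theorem op_smul_eq_zero_of_skewSMul_eq_zero {m : ℕ →₀ M} {f : ℕ →₀ R}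
    (h : skewSMul σ δ m f = 0) (j l : ℕ) : op (f l) • m j = 0 := by
  set T := m.support.sup id + f.support.sup id
  have hbase : ∀ j l, T < j + l → op (f l) • m j = 0 := by
    intro j l hjl
    by_cases hmj : m j = 0
    · rw [hmj, smul_zero]
    by_cases hfl : f l = 0
    · rw [hfl, op_zero, zero_smul]
    have hj := Finset.le_sup (f := id) (Finsupp.mem_support_iff.2 hmj)
    have hl := Finset.le_sup (f := id) (Finsupp.mem_support_iff.2 hfl)
    simp only [id] at hj hl
    omega
  have hdesc : ∀ d j l, T < j + l + d → op (f l) • m j = 0 := by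
    intro d
    induction d with
    | zero => exact hbase
    | succ d ih =>
      intro j l hjl
      by_cases hdone : T < j + l + d
      · exact ih j l hdone
      · exact op_smul_eq_zero_of_add_eq hσ hδ hM h (fun j' l' _ => ih j' l' (by omega)) rfl
  exact hdesc (T + 1) j l (by omega)

end Compatible

end SkewPolynomialModule

theorem compatible_reduced_star_general {R : Type*} [Ring R] (σ : R →+* R) (δ : R → R)
    (M : Type*) [AddCommGroup M] [Module Rᵐᵒᵖ M]
    (hred : IsReducedModule (R := R) M)
    (hσ : SigmaCompatible ⇑σ M) (hδc : DeltaCompatible δ M) :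
    StarCondition ⇑σ δ M := by
  intro m f h r
  refine skewSMul_eq_zero_of_forall_op_smul_eq_zero hσ hδc fun j l => ?_
  rw [skewMul_single_zero_apply]
  exact hred.op_mul_smul_eq_zero (op_smul_eq_zero_of_skewSMul_eq_zero hσ hδc hred h j l) r

/-- If a module `M_R` is `(σ,δ)`-compatible and reduced, then it satisfies condition `(*)`:
`m(x) f(x) = 0` implies `m(x) r f(x) = 0` for all `r ∈ R`. -/
theorem compatible_reduced_star {R : Type*} [Ring R] (σ : R →+* R) (δ : R → R)
    (hδadd : ∀ a b : R, δ (a + b) = δ a + δ b)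
    (hδmul : ∀ a b : R, δ (a * b) = σ a * δ b + δ a * b)
    (M : Type*) [AddCommGroup M] [Module Rᵐᵒᵖ M]
    (hred : IsReducedModule (R := R) M)
    (hσ : SigmaCompatible ⇑σ M) (hδc : DeltaCompatible δ M) :
    StarCondition ⇑σ δ M :=
  compatible_reduced_star_general σ δ M hred hσ hδc
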